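/- There exists a bijective correspondence between the set of wide subcategories of the heart H and the set of homology-determined thick subcategories of D, sending a wide subcategory W to the subcategory {X ∈ D | H^k X ∈ W for all k ∈ ℤ}, with inverse E ↦ H^0 E. Moreover, if the t-structure (D^{≤0}, D^{≥1}) is bounded, then the homology-determined thick subcategories of D are exactly the H^0-stable thick subcategories of D. -/

import Mathlib

open CategoryTheory Limits ZeroObject

namespace ICEPaper

section AbelianPart


variable {A : Type*} [Category A] [Abelian A]

/-- A full additive subcategory (given by its class of objects), closed under isomorphisms. -/
structure IsSubcat (C : Set A) : Prop where
  mem_of_iso : ∀ ⦃X Y : A⦄, (X ≅ Y) → X ∈ C → Y ∈ C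
  zero_mem : (0 : A) ∈ C
  biprod_mem : ∀ ⦃X Y : A⦄, X ∈ C → Y ∈ C → (X ⊞ Y) ∈ C

/-- `C` is closed under extensions. -/
def ClosedUnderExtensions (C : Set A) : Prop :=
  ∀ (S : ShortComplex A), S.ShortExact → S.X₁ ∈ C → S.X₃ ∈ C → S.X₂ ∈ C

/-- `C` is closed under quotients in `A`. -/
def ClosedUnderQuotients (C : Set A) : Prop :=
  ∀ ⦃X Y : A⦄ (f : X ⟶ Y), Epi f → X ∈ C → Y ∈ C

/-- `C` is closed under images. -/
def ClosedUnderImages (C : Set A) : Prop :=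
  ∀ ⦃X Y : A⦄ (f : X ⟶ Y), X ∈ C → Y ∈ C → image f ∈ C

/-- `C` is closed under cokernels. -/
def ClosedUnderCokernels (C : Set A) : Prop :=
  ∀ ⦃X Y : A⦄ (f : X ⟶ Y), X ∈ C → Y ∈ C → cokernel f ∈ C

/-- `C` is closed under kernels. -/
def ClosedUnderKernels (C : Set A) : Prop :=
  ∀ ⦃X Y : A⦄ (f : X ⟶ Y), X ∈ C → Y ∈ C → kernel f ∈ C

/-- `C` is a torsion class in `A`. -/
structure IsTorsionClass (C : Set A) : Prop where
  subcat : IsSubcat C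
  ext : ClosedUnderExtensions C
  quot : ClosedUnderQuotients C

/-- `C` is a wide subcategory of `A`. -/
structure IsWide (C : Set A) : Prop where
  subcat : IsSubcat C
  ext : ClosedUnderExtensions C
  ker : ClosedUnderKernels C
  coker : ClosedUnderCokernels C

/-- `C` is an ICE-closed subcategory of `A`. -/
structure IsICEClosed (C : Set A) : Prop where
  subcat : IsSubcat C
  im : ClosedUnderImages C
  coker : ClosedUnderCokernels C
  ext : ClosedUnderExtensions C

/-- `αC = {X ∈ C ∣ every morphism f : C' ⟶ X with C' ∈ C has ker f ∈ C}`. -/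
def alphaSub (C : Set A) : Set A :=
  {X | X ∈ C ∧ ∀ ⦃C' : A⦄ (f : C' ⟶ X), C' ∈ C → kernel f ∈ C}

/-- `D` is a torsion class in the full (wide, hence abelian) subcategory `W` of `A`:
`D ⊆ W`, and `D` is closed under extensions and quotients inside `W`.
(Here short exact sequences and epimorphisms in the wide subcategory `W` are
exactly those of `A` with terms in `W`.) -/
structure IsTorsionClassIn (W D : Set A) : Prop where
  subset : D ⊆ W
  subcat : IsSubcat D
  ext : ∀ (S : ShortComplex A), S.ShortExact → S.X₁ ∈ D → S.X₃ ∈ D → S.X₂ ∈ D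
  quot : ∀ ⦃X Y : A⦄ (f : X ⟶ Y), Epi f → X ∈ D → Y ∈ W → Y ∈ D

/-- The exactness condition defining narrow sequences: for every exact sequence
`A → B → C → D → E` with `A ∈ C(k−1)`, `B, D ∈ C(k)` and `E ∈ C(k+1)` one has `C ∈ C(k)`. -/
def NarrowCondition (C : ℤ → Set A) : Prop :=
  ∀ (k : ℤ) (S : ComposableArrows A 4), S.Exact →
    S.obj' 0 ∈ C (k - 1) → S.obj' 1 ∈ C k → S.obj' 3 ∈ C k → S.obj' 4 ∈ C (k + 1) →
    S.obj' 2 ∈ C k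

/-- A narrow sequence in `A`. -/
structure IsNarrowSequence (C : ℤ → Set A) : Prop where
  subcat : ∀ k, IsSubcat (C k)
  decreasing : ∀ k, C (k + 1) ⊆ C k
  narrow : NarrowCondition C

/-- An ICE sequence in `A`. -/
structure IsICESequence (C : ℤ → Set A) : Prop where
  ice : ∀ k, IsICEClosed (C k)
  tors : ∀ k, IsTorsionClassIn (alphaSub (C k)) (C (k + 1))

/-- The zero subcategory. -/
def zeroSubcat : Set A := {X | IsZero X}


end AbelianPart


section Approximations

variable {C : Type*} [Category C]

/-- A subcategory `B` (given by its class of objects) of a category is contravariantly finite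
if every object admits a right `B`-approximation. -/
def ContravariantlyFinite (B : Set C) : Prop :=
  ∀ X : C, ∃ (B₀ : C) (_ : B₀ ∈ B) (f : B₀ ⟶ X),
    ∀ (B' : C) (_ : B' ∈ B) (g : B' ⟶ X), ∃ h : B' ⟶ B₀, h ≫ f = g

/-- Dually, `B` is covariantly finite if every object admits a left `B`-approximation. -/
def CovariantlyFinite (B : Set C) : Prop :=
  ∀ X : C, ∃ (B₀ : C) (_ : B₀ ∈ B) (f : X ⟶ B₀),
    ∀ (B' : C) (_ : B' ∈ B) (g : X ⟶ B'), ∃ h : B₀ ⟶ B', f ≫ h = g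

end Approximations

open Pretriangulated Triangulated

variable {D : Type*} [Category D] [Preadditive D] [HasZeroObject D] [HasShift D ℤ]
  [∀ n : ℤ, (shiftFunctor D n).Additive] [Pretriangulated D]

/-- The shifted subcategory `U[k] = {X ∣ X⟦-k⟧ ∈ U}`. -/
def shiftSet (U : Set D) (k : ℤ) : Set D := {X : D | X⟦(-k)⟧ ∈ U}

/-- A preaisle: a subcategory (full, iso-closed, containing `0`) closed under extensions and
positive shifts. -/
structure IsPreaisle (U : Set D) : Prop where
  mem_of_iso : ∀ ⦃X Y : D⦄, (X ≅ Y) → X ∈ U → Y ∈ U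
  zero_mem : (0 : D) ∈ U
  ext : ∀ (T : Triangle D), T ∈ (distTriang D) → T.obj₁ ∈ U → T.obj₃ ∈ U → T.obj₂ ∈ U
  shift : ∀ ⦃X : D⦄, X ∈ U → X⟦(1 : ℤ)⟧ ∈ U

/-- A thick subcategory: a triangulated subcategory closed under direct summands. -/
structure IsThick (E : Set D) : Prop where
  mem_of_iso : ∀ ⦃X Y : D⦄, (X ≅ Y) → X ∈ E → Y ∈ E
  zero_mem : (0 : D) ∈ E
  ext : ∀ (T : Triangle D), T ∈ (distTriang D) → T.obj₁ ∈ E → T.obj₃ ∈ E → T.obj₂ ∈ E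
  shift : ∀ ⦃X : D⦄ (k : ℤ), X ∈ E → X⟦k⟧ ∈ E
  summand : ∀ ⦃X Y : D⦄ (i : X ⟶ Y) (r : Y ⟶ X), i ≫ r = 𝟙 X → Y ∈ E → X ∈ E

variable (t : TStructure D)

/-- `D^{≤n}` as a set of objects. -/
def DLE (n : ℤ) : Set D := {X : D | t.le n X}

/-- `D^{≥n}` as a set of objects. -/
def DGE (n : ℤ) : Set D := {X : D | t.ge n X}

/-- The heart `D^{≤0} ∩ D^{≥0}` of the t-structure, as a set of objects of `D`. -/
def heartSet : Set D := {X : D | t.le 0 X ∧ t.ge 0 X}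

/-- The t-structure `t` is bounded. -/
def BoundedT : Prop := ∀ X : D, (∃ n : ℤ, t.le n X) ∧ (∃ n : ℤ, t.ge n X)

/-- The t-structure `t` is nondegenerate. -/
def NonDegenerateT : Prop :=
  (∀ X : D, (∀ n : ℤ, t.le n X) → IsZero X) ∧ (∀ X : D, (∀ n : ℤ, t.ge n X) → IsZero X)

/-- `U` is an aisle: it is the aisle (`D'^{≤0}`) of some t-structure on `D`. -/
def IsAisle (U : Set D) : Prop := ∃ t' : TStructure D, U = DLE t' 0

/-- Data realizing the heart of the t-structure `t` as an abelian category `A`: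
a fully faithful additive functor `ι : A ⥤ D` with essential image the heart of `t`,
identifying short exact sequences in `A` with distinguished triangles of `D` with all three
objects in the heart, together with the associated cohomological functor `H⁰ : D ⥤ A`
(characterized by being homological, restricting to the identity on the heart, and the
standard vanishing on `D^{≤n}` and `D^{≥n}`). -/
structure HeartData (A : Type*) [Category A] [Abelian A] where
  ι : A ⥤ D
  full : ι.Full
  faithful : ι.Faithful
  additive : ι.Additive
  mem_heart : ∀ Y : A, ι.obj Y ∈ heartSet t
  heart_mem : ∀ X : D, X ∈ heartSet t → ∃ Y : A, Nonempty (ι.obj Y ≅ X)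
  shortExact_iff : ∀ S : ShortComplex A, S.ShortExact ↔
    ∃ h : ι.obj S.X₃ ⟶ (ι.obj S.X₁)⟦(1 : ℤ)⟧,
      Triangle.mk (ι.map S.f) (ι.map S.g) h ∈ distTriang D
  H0 : D ⥤ A
  homological : H0.IsHomological
  H0_additive : H0.Additive
  heartIso : ι ⋙ H0 ≅ 𝟭 A
  LE_vanish : ∀ (X : D) (n k : ℤ), t.le n X → n < k → IsZero (H0.obj (X⟦k⟧))
  GE_vanish : ∀ (X : D) (n k : ℤ), t.ge n X → k < n → IsZero (H0.obj (X⟦k⟧))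

variable {t} {A : Type*} [Category A] [Abelian A] (hd : HeartData t A)

/-- The cohomology `H^k = H⁰ ∘ ⟦k⟧`, on objects. -/
def HeartData.H (k : ℤ) (X : D) : A := hd.H0.obj (X⟦k⟧)

/-- `U ⊆ D` is homology-determined: `X ∈ U` iff `H^k X ∈ U[k]` for all `k ∈ ℤ`. -/
def IsHomDet (U : Set D) : Prop :=
  ∀ X : D, X ∈ U ↔ ∀ k : ℤ, hd.ι.obj (hd.H k X) ∈ shiftSet U k

/-- `H^k U`, the image of `U` under `H^k`, as a subcategory of the heart `A`
(closed under isomorphisms). -/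
def HkSet (U : Set D) (k : ℤ) : Set A := {Y : A | ∃ X ∈ U, Nonempty (Y ≅ hd.H k X)}

/-- `θ(C) = {X ∈ D ∣ H^k X ∈ C(k) for all k ∈ ℤ}`. -/
def thetaSet (C : ℤ → Set A) : Set D := {X : D | ∀ k : ℤ, hd.H k X ∈ C k}

/-- `E ⊆ D` is `H⁰`-stable: `H⁰ X ∈ E` for every `X ∈ E`. -/
def H0Stable (E : Set D) : Prop := ∀ X ∈ E, hd.ι.obj (hd.H 0 X) ∈ E

/-!
For a wide subcategory `W` of the heart, `{X | ∀ k, H^k X ∈ W}` is thick because the long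
exact cohomology sequence of a triangle presents each `H^k` of its middle term as an extension
of a kernel by a cokernel of maps in `W`. Conversely, if `E` is thick and homology-determined,
the heart objects lying in `E` form a wide subcategory: for `f : Y ⟶ Y'` in the heart, the cone
of `ι f` lies in `E`, and its `H⁻¹` and `H⁰` are `ker f` and `coker f`. The two constructions
are inverse since both sides are determined by the heart objects they contain.
For a bounded t-structure, an `H⁰`-stable thick subcategory is homology-determined by induction
on the cohomological amplitude: a truncation triangle splits off the top cohomology, which is a
shifted heart object.
-/

section Wide

variable {C : Type*} [Category C] [Abelian C] {W : Set C}

lemma IsSubcat.mem_of_isZero (hW : IsSubcat W) {X : C} (hX : IsZero X) : X ∈ W :=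
  hW.mem_of_iso hX.isoZero.symm hW.zero_mem

lemma IsWide.closedUnderImages (hW : IsWide W) : ClosedUnderImages W := fun _ _ f hX hY ↦
  hW.subcat.mem_of_iso (Abelian.imageIsoImage f) (hW.ker _ hY (hW.coker f hX hY))

lemma IsWide.mem_of_retract (hW : IsWide W) {X Y : C} (i : X ⟶ Y) (r : Y ⟶ X)
    (hir : i ≫ r = 𝟙 X) (hY : Y ∈ W) : X ∈ W :=
  have : IsSplitEpi r := ⟨⟨i, hir⟩⟩
  have : IsSplitMono i := ⟨⟨r, hir⟩⟩
  hW.subcat.mem_of_iso (image.isoStrongEpiMono r i rfl).symm (hW.closedUnderImages _ hY hY)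

/-- The middle term of an exact sequence `X₀ → X₁ → X₂ → X₃ → X₄` is an extension of
`ker f₃` by `coker f₀`. -/
lemma IsWide.mem_of_exact (hW : IsWide W)
    {X₀ X₁ X₂ X₃ X₄ : C} {f₀ : X₀ ⟶ X₁} {f₁ : X₁ ⟶ X₂} {f₂ : X₂ ⟶ X₃} {f₃ : X₃ ⟶ X₄}
    {w₀ : f₀ ≫ f₁ = 0} {w₁ : f₁ ≫ f₂ = 0} {w₂ : f₂ ≫ f₃ = 0}
    (e₀ : (ShortComplex.mk f₀ f₁ w₀).Exact) (e₁ : (ShortComplex.mk f₁ f₂ w₁).Exact)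
    (e₂ : (ShortComplex.mk f₂ f₃ w₂).Exact)
    (h₀ : X₀ ∈ W) (h₁ : X₁ ∈ W) (h₃ : X₃ ∈ W) (h₄ : X₄ ∈ W) : X₂ ∈ W := by
  have hw : cokernel.desc f₀ f₁ w₀ ≫ kernel.lift f₃ f₂ w₂ = 0 := by ext; simp [w₁]
  have hw' : f₁ ≫ kernel.lift f₃ f₂ w₂ = 0 := by ext; simp [w₁]
  have e₁' : (ShortComplex.mk f₁ _ hw').Exact :=
    (ShortComplex.exact_iff_of_epi_of_isIso_of_mono (S₁ := .mk f₁ _ hw') (S₂ := .mk f₁ f₂ w₁)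
      ⟨𝟙 _, 𝟙 _, kernel.ι f₃, by simp, by simp⟩).2 e₁
  have hexact : (ShortComplex.mk _ _ hw).Exact :=
    (ShortComplex.exact_iff_of_epi_of_isIso_of_mono (S₁ := .mk f₁ _ hw') (S₂ := .mk _ _ hw)
      ⟨cokernel.π f₀, 𝟙 _, 𝟙 _, by simp, by simp⟩).1 e₁'
  exact hW.ext _ (.mk' hexact e₀.mono_cokernelDesc e₂.epi_kernelLift)
    (hW.coker f₀ h₀ h₁) (hW.ker f₃ h₃ h₄)

end Wide

section Thick

variable {E : Set D}

lemma IsThick.mem_of_isZero (hE : IsThick E) {X : D} (hX : IsZero X) : X ∈ E :=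
  hE.mem_of_iso hX.isoZero.symm hE.zero_mem

lemma IsThick.shift_mem_iff (hE : IsThick E) (X : D) (k : ℤ) : X⟦k⟧ ∈ E ↔ X ∈ E :=
  ⟨fun h ↦ hE.mem_of_iso ((shiftFunctorCompIsoId D k (-k) (add_neg_cancel k)).app X)
    (hE.shift (-k) h), hE.shift k⟩

end Thick

namespace HeartData

-- With the tautological shift sequence, `(hd.H0.shift k).obj X` is `hd.H k X` by definition.
attribute [local instance] homological H0_additive additive Functor.ShiftSequence.tautological

variable {W : Set A} {E : Set D}

lemma isHomDet_iff (hE : IsThick E) :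
    IsHomDet hd E ↔ ∀ X : D, X ∈ E ↔ ∀ k : ℤ, hd.ι.obj (hd.H k X) ∈ E := by
  simp only [IsHomDet, shiftSet, Set.mem_ofPred_eq, hE.shift_mem_iff]

noncomputable def HShiftIso (a k n : ℤ) (h : a + k = n) (X : D) : hd.H k (X⟦a⟧) ≅ hd.H n X :=
  hd.H0.mapIso ((shiftFunctorAdd' D a k n h).symm.app X)

noncomputable def HιIso : hd.ι ⋙ shiftFunctor D (0 : ℤ) ⋙ hd.H0 ≅ 𝟭 A :=
  Functor.isoWhiskerLeft hd.ι
    (Functor.isoWhiskerRight (shiftFunctorZero D ℤ) hd.H0 ≪≫ Functor.leftUnitor _) ≪≫ hd.heartIso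

lemma isZero_H_ι_obj (Y : A) {k : ℤ} (hk : k ≠ 0) : IsZero (hd.H k (hd.ι.obj Y)) := by
  rcases lt_or_gt_of_ne hk with h | h
  · exact hd.GE_vanish _ 0 k (hd.mem_heart Y).2 h
  · exact hd.LE_vanish _ 0 k (hd.mem_heart Y).1 h

lemma isZero_H_of_isZero {X : D} (hX : IsZero X) (k : ℤ) : IsZero (hd.H k X) :=
  hd.H0.map_isZero ((shiftFunctor D k).map_isZero hX)

lemma H_mem_of_distTriang (hW : IsWide W) (T : Triangle D) (hT : T ∈ distTriang D)
    (h₁ : ∀ k, hd.H k T.obj₁ ∈ W) (h₃ : ∀ k, hd.H k T.obj₃ ∈ W) (k : ℤ) : hd.H k T.obj₂ ∈ W :=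
  hW.mem_of_exact (hd.H0.homologySequence_exact₁ T hT (k - 1) k (by omega))
    (hd.H0.homologySequence_exact₂ T hT k) (hd.H0.homologySequence_exact₃ T hT k (k + 1) rfl)
    (h₃ (k - 1)) (h₁ k) (h₃ k) (h₁ (k + 1))

lemma isThick_thetaSet_const (hW : IsWide W) : IsThick (thetaSet hd fun _ ↦ W) where
  mem_of_iso _ _ e hX k := hW.subcat.mem_of_iso (hd.H0.mapIso ((shiftFunctor D k).mapIso e)) (hX k)
  zero_mem k := hW.subcat.mem_of_isZero (hd.isZero_H_of_isZero (isZero_zero D) k)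
  ext := hd.H_mem_of_distTriang hW
  shift _ n hX k := hW.subcat.mem_of_iso (hd.HShiftIso n k _ rfl _).symm (hX _)
  summand _ _ i r hir hY k := hW.mem_of_retract (hd.H0.map (i⟦k⟧')) (hd.H0.map (r⟦k⟧'))
    (by dsimp only [H]; simp only [← Functor.map_comp, hir, CategoryTheory.Functor.map_id]) (hY k)

lemma ι_obj_mem_thetaSet_const_iff (hW : IsSubcat W) (Y : A) :
    hd.ι.obj Y ∈ thetaSet hd (fun _ ↦ W) ↔ Y ∈ W := by
  refine ⟨fun hY ↦ hW.mem_of_iso (hd.HιIso.app Y) (hY 0), fun hY k ↦ ?_⟩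
  obtain rfl | hk := eq_or_ne k 0
  · exact hW.mem_of_iso (hd.HιIso.app Y).symm hY
  · exact hW.mem_of_isZero (hd.isZero_H_ι_obj Y hk)

lemma isHomDet_thetaSet_const (hW : IsWide W) : IsHomDet hd (thetaSet hd fun _ ↦ W) := by
  rw [hd.isHomDet_iff (hd.isThick_thetaSet_const hW)]
  exact fun X ↦ (forall_congr' fun k ↦ hd.ι_obj_mem_thetaSet_const_iff hW.subcat _).symm

lemma nonempty_kernel_iso_H {Y Y' : A} (f : Y ⟶ Y') {Z : D} (g : hd.ι.obj Y' ⟶ Z)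
    (h : Z ⟶ (hd.ι.obj Y)⟦(1 : ℤ)⟧) (hT : Triangle.mk (hd.ι.map f) g h ∈ distTriang D) :
    Nonempty (kernel f ≅ hd.H (-1) Z) := by
  have e₁ := hd.H0.homologySequence_exact₃ _ hT (-1) 0 (by omega)
  have e₂ := hd.H0.homologySequence_exact₁ _ hT (-1) 0 (by omega)
  have := e₁.mono_g ((hd.isZero_H_ι_obj Y' (by omega : (-1 : ℤ) ≠ 0)).eq_of_src _ _)
  exact ⟨(kernel.mapIso _ f (hd.HιIso.app Y) (hd.HιIso.app Y') (hd.HιIso.hom.naturality f)).symm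
    ≪≫ (limit.isLimit _).conePointUniqueUpToIso e₂.fIsKernel⟩

lemma nonempty_cokernel_iso_H {Y Y' : A} (f : Y ⟶ Y') {Z : D} (g : hd.ι.obj Y' ⟶ Z)
    (h : Z ⟶ (hd.ι.obj Y)⟦(1 : ℤ)⟧) (hT : Triangle.mk (hd.ι.map f) g h ∈ distTriang D) :
    Nonempty (cokernel f ≅ hd.H 0 Z) := by
  have e₁ := hd.H0.homologySequence_exact₂ _ hT 0
  have e₂ := hd.H0.homologySequence_exact₃ _ hT 0 1 rfl
  have := e₂.epi_f ((hd.isZero_H_ι_obj Y one_ne_zero).eq_of_tgt _ _)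
  exact ⟨(cokernel.mapIso _ f (hd.HιIso.app Y) (hd.HιIso.app Y') (hd.HιIso.hom.naturality f)).symm
    ≪≫ (colimit.isColimit _).coconePointUniqueUpToIso e₁.gIsCokernel⟩

lemma isWide_preimage (hE : IsThick E) (hdet : IsHomDet hd E) : IsWide (hd.ι.obj ⁻¹' E) := by
  have ker_coker_mem {Y Y' : A} (f : Y ⟶ Y') (hY : hd.ι.obj Y ∈ E) (hY' : hd.ι.obj Y' ∈ E) :
      hd.ι.obj (kernel f) ∈ E ∧ hd.ι.obj (cokernel f) ∈ E := by
    obtain ⟨Z, g, h, hT⟩ := distinguished_cocone_triangle (hd.ι.map f)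
    have hZ : Z ∈ E := hE.ext _ (rot_of_distTriang _ hT) hY' (hE.shift 1 hY)
    have hHZ := ((hd.isHomDet_iff hE).1 hdet Z).1 hZ
    obtain ⟨eK⟩ := hd.nonempty_kernel_iso_H f g h hT
    obtain ⟨eC⟩ := hd.nonempty_cokernel_iso_H f g h hT
    exact ⟨hE.mem_of_iso (hd.ι.mapIso eK.symm) (hHZ _), hE.mem_of_iso (hd.ι.mapIso eC.symm) (hHZ _)⟩
  refine ⟨⟨fun _ _ e ↦ hE.mem_of_iso (hd.ι.mapIso e), ?_, fun X Y hX hY ↦ ?_⟩, ?_,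
    fun _ _ f hY hY' ↦ (ker_coker_mem f hY hY').1, fun _ _ f hY hY' ↦ (ker_coker_mem f hY hY').2⟩
  · exact hE.mem_of_isZero (hd.ι.map_isZero (isZero_zero A))
  · have : PreservesBinaryBiproducts hd.ι := preservesBinaryBiproducts_of_preservesBiproducts _
    exact hE.mem_of_iso (hd.ι.mapBiprod X Y).symm
      (hE.ext _ (binaryBiproductTriangle_distinguished _ _) hX hY)
  · intro S hS h₁ h₃
    obtain ⟨_, hT⟩ := (hd.shortExact_iff S).1 hS
    exact hE.ext _ hT h₁ h₃

lemma thetaSet_const_preimage (hE : IsThick E) (hdet : IsHomDet hd E) :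
    thetaSet hd (fun _ ↦ hd.ι.obj ⁻¹' E) = E :=
  Set.ext fun X ↦ ((hd.isHomDet_iff hE).1 hdet X).symm

noncomputable def wideEquivHomDetThick :
    {W : Set A // IsWide W} ≃ {E : Set D // IsThick E ∧ IsHomDet hd E} where
  toFun W :=
    ⟨thetaSet hd fun _ ↦ W.1, hd.isThick_thetaSet_const W.2, hd.isHomDet_thetaSet_const W.2⟩
  invFun E := ⟨hd.ι.obj ⁻¹' E.1, hd.isWide_preimage E.2.1 E.2.2⟩
  left_inv W := Subtype.ext (Set.ext (hd.ι_obj_mem_thetaSet_const_iff W.2.subcat))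
  right_inv E := Subtype.ext (hd.thetaSet_const_preimage E.2.1 E.2.2)

lemma H0Stable_of_isHomDet (hE : IsThick E) (hdet : IsHomDet hd E) : H0Stable hd E :=
  fun X hX ↦ ((hd.isHomDet_iff hE).1 hdet X).1 hX 0

lemma HkSet_zero_eq_preimage (hE : IsThick E) (hstab : H0Stable hd E) :
    HkSet hd E 0 = hd.ι.obj ⁻¹' E := by
  ext Y
  refine ⟨fun ⟨X, hX, ⟨e⟩⟩ ↦ hE.mem_of_iso (hd.ι.mapIso e.symm) (hstab X hX), fun hY ↦ ?_⟩
  exact ⟨hd.ι.obj Y, hY, ⟨(hd.HιIso.app Y).symm⟩⟩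

lemma nonempty_H_obj₂_iso_H_obj₃ (T : Triangle D) (hT : T ∈ distTriang D) (k : ℤ)
    (h₀ : IsZero (hd.H k T.obj₁)) (h₁ : IsZero (hd.H (k + 1) T.obj₁)) :
    Nonempty (hd.H k T.obj₂ ≅ hd.H k T.obj₃) := by
  have := (hd.H0.homologySequence_mono_shift_map_mor₂_iff T hT k).2 (h₀.eq_of_src _ _)
  have := (hd.H0.homologySequence_epi_shift_map_mor₂_iff T hT k _ rfl).2 (h₁.eq_of_tgt _ _)
  exact ⟨@asIso _ _ _ _ _ (isIso_of_mono_of_epi ((hd.H0.shift k).map T.mor₂))⟩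

lemma nonempty_H_obj₁_iso_H_obj₂ (T : Triangle D) (hT : T ∈ distTriang D) (k : ℤ)
    (h₀ : IsZero (hd.H (k - 1) T.obj₃)) (h₁ : IsZero (hd.H k T.obj₃)) :
    Nonempty (hd.H k T.obj₁ ≅ hd.H k T.obj₂) := by
  have := (hd.H0.homologySequence_mono_shift_map_mor₁_iff T hT (k - 1) k (by omega)).2
    (h₀.eq_of_src _ _)
  have := (hd.H0.homologySequence_epi_shift_map_mor₁_iff T hT k).2 (h₁.eq_of_tgt _ _)
  exact ⟨@asIso _ _ _ _ _ (isIso_of_mono_of_epi ((hd.H0.shift k).map T.mor₁))⟩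

lemma mem_of_concentrated (hE : IsThick E) {X : D} {k : ℤ} (hle : t.le k X)
    (hge : t.ge k X) (hH : hd.ι.obj (hd.H k X) ∈ E) : X ∈ E := by
  obtain ⟨Y, ⟨e⟩⟩ := hd.heart_mem (X⟦k⟧)
    ⟨t.le_shift k k 0 (add_zero k) X hle, t.ge_shift k k 0 (add_zero k) X hge⟩
  rw [← hE.shift_mem_iff X k]
  exact hE.mem_of_iso e (hE.mem_of_iso (hd.ι.mapIso (hd.H0.mapIso e.symm ≪≫ hd.heartIso.app Y)) hH)

lemma mem_of_le_of_ge (hE : IsThick E) {X : D} {n m : ℤ} (hle : t.le n X) (hge : t.ge m X)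
    (hH : ∀ k, hd.ι.obj (hd.H k X) ∈ E) : X ∈ E := by
  replace hle : ∃ N, m - 1 ≤ N ∧ t.le N X :=
    ⟨max n (m - 1), le_max_right _ _, t.le_monotone (le_max_left _ _) _ hle⟩
  obtain ⟨N, hN, hle⟩ := hle
  induction N, hN using Int.leInduction generalizing X with
  | base =>
    have : t.IsLE X (m - 1) := ⟨hle⟩
    have : t.IsGE X m := ⟨hge⟩
    exact hE.mem_of_isZero (t.isZero X (m - 1) m)
  | succ n _ ih =>
    -- split off the top cohomology `H^(n+1) X`, carried by the truncation `B = τ_{≥ n+1} X`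
    obtain ⟨X', B, hX', hB, f, g, h, hT⟩ := t.exists_triangle X n (n + 1) rfl
    have hBle : t.le (n + 1) B := (t.isLE₂ _ (rot_of_distTriang _ hT) (n + 1) ⟨hle⟩
      ⟨t.le_monotone (by omega) _ (t.le_shift n 1 (n - 1) (by omega) X' hX')⟩).le
    have hX'ge : t.ge m X' := (t.isGE₂ _ (inv_rot_of_distTriang _ hT) m
      ⟨t.ge_antitone (by omega) _ (t.ge_shift (n + 1) (-1) (n + 2) (by omega) B hB)⟩ ⟨hge⟩).ge
    refine hE.ext _ hT (ih hX'ge (fun k ↦ ?_) hX') (hd.mem_of_concentrated hE hBle hB ?_)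
    · obtain hk | hk := le_or_gt k n
      · obtain ⟨e⟩ := hd.nonempty_H_obj₁_iso_H_obj₂ _ hT k
          (hd.GE_vanish B (n + 1) (k - 1) hB (by omega)) (hd.GE_vanish B (n + 1) k hB (by omega))
        exact hE.mem_of_iso (hd.ι.mapIso e.symm) (hH k)
      · exact hE.mem_of_isZero (hd.ι.map_isZero (hd.LE_vanish X' n k hX' hk))
    · obtain ⟨e⟩ := hd.nonempty_H_obj₂_iso_H_obj₃ _ hT (n + 1)
        (hd.LE_vanish X' n (n + 1) hX' (by omega)) (hd.LE_vanish X' n (n + 1 + 1) hX' (by omega))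
      exact hE.mem_of_iso (hd.ι.mapIso e) (hH (n + 1))

lemma isHomDet_of_H0Stable (hb : BoundedT t) (hE : IsThick E) (hstab : H0Stable hd E) :
    IsHomDet hd E := by
  refine (hd.isHomDet_iff hE).2 fun X ↦ ⟨fun hX k ↦ ?_, fun hH ↦ ?_⟩
  · exact hE.mem_of_iso (hd.ι.mapIso (hd.HShiftIso k 0 k (add_zero k) X))
      (hstab _ (hE.shift k hX))
  · obtain ⟨⟨n, hn⟩, m, hm⟩ := hb X
    exact hd.mem_of_le_of_ge hE hn hm hH

end HeartData

/-- **Corollary.** Wide subcategories of the heart `H` are in bijection with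
homology-determined thick subcategories of `D`, via `W ↦ {X ∈ D ∣ H^k X ∈ W for all k}` with
inverse `E ↦ H⁰ E`. Moreover, if the t-structure is bounded, then the homology-determined
thick subcategories are exactly the `H⁰`-stable thick subcategories. -/
theorem wideSubcats_equiv_homDetThick
    {D : Type*} [Category D] [Preadditive D] [HasZeroObject D] [HasShift D ℤ]
    [∀ n : ℤ, (shiftFunctor D n).Additive] [Pretriangulated D]
    {t : Triangulated.TStructure D} {A : Type*} [Category A] [Abelian A]
    (hd : HeartData t A) :
    (∃ e : {W : Set A // IsWide W} ≃ {E : Set D // IsThick E ∧ IsHomDet hd E},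
      (∀ W, (e W).1 = {X : D | ∀ k : ℤ, hd.H k X ∈ W.1}) ∧
        (∀ E, (e.symm E).1 = HkSet hd E.1 0)) ∧
      (BoundedT t → ∀ E : Set D, IsThick E → (IsHomDet hd E ↔ H0Stable hd E)) :=
  ⟨⟨hd.wideEquivHomDetThick, fun _ ↦ rfl,
      fun E ↦ (hd.HkSet_zero_eq_preimage E.2.1 (hd.H0Stable_of_isHomDet E.2.1 E.2.2)).symm⟩,
    fun hb _ hE ↦ ⟨hd.H0Stable_of_isHomDet hE, hd.isHomDet_of_H0Stable hb hE⟩⟩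

end ICEPaper
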